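/- arXiv:1506.08548 — 2 statements merged into one kernel-verified Lean document; each statement's English description precedes it below -/
import Mathlib

section
/- Correctness of aggregate verification: let y_i = g₂^{κ_i} for i = 1,…,l, and suppose for each j = 1,…,n signer j belongs to TA index t(j) ∈ {1,…,l} with signature σ_j = id_{j,0}^{κ_{t(j)}} · id_{j,1}^{κ_{t(j)} h_j}, where id_{j,0}, id_{j,1} ∈ G₁ and h_j ∈ ℤ_q. Then Ω = ∏_{j=1}^n σ_j satisfies ê(Ω, g₂) = ∏_{i=1}^l ê( ∏_{j : t(j)=i} id_{j,0} · id_{j,1}^{h_j}, y_i ). -/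
open Finset

/-- correctness of aggregate verification. -/
theorem stmt2 {G₁ G₂ GT : Type*} [CommGroup G₁] [CommGroup G₂] [CommGroup GT]
    (q : ℕ) (hq : q.Prime) (g₁ : G₁) (g₂ : G₂)
    (hcard₁ : Nat.card G₁ = q) (hcard₂ : Nat.card G₂ = q) (hcardT : Nat.card GT = q)
    (e : G₁ → G₂ → GT)
    (hl : ∀ (x x' : G₁) (y : G₂), e (x * x') y = e x y * e x' y)
    (hr : ∀ (x : G₁) (y y' : G₂), e x (y * y') = e x y * e x y')
    (hpl : ∀ (x : G₁) (y : G₂) (k : ℤ), e (x ^ k) y = e x y ^ k)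
    (hpr : ∀ (x : G₁) (y : G₂) (k : ℤ), e x (y ^ k) = e x y ^ k)
    (n l : ℕ) (t : Fin n → Fin l) (κ : Fin l → ℤ)
    (id0 id1 : Fin n → G₁) (h : Fin n → ℤ)
    (y : Fin l → G₂) (hy : ∀ i, y i = g₂ ^ κ i)
    (σ : Fin n → G₁)
    (hσ : ∀ j, σ j = (id0 j) ^ κ (t j) * (id1 j) ^ (κ (t j) * h j))
    (Ω : G₁) (hΩ : Ω = ∏ j, σ j) :
    e Ω g₂ =
      ∏ i, e (∏ j ∈ univ.filter (fun j => t j = i), id0 j * (id1 j) ^ h j) (y i) := by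
  have h1 : ∀ yy : G₂, e 1 yy = 1 := by
    intro yy
    have := hl 1 1 yy
    rw [mul_one] at this
    exact (left_eq_mul.mp this)
  have hprod : ∀ (s : Finset (Fin n)) (f : Fin n → G₁) (yy : G₂),
      e (∏ j ∈ s, f j) yy = ∏ j ∈ s, e (f j) yy := by
    intro s f yy
    exact map_prod (⟨⟨fun x => e x yy, h1 yy⟩, fun a b => hl a b yy⟩ : G₁ →* GT) f s
  calc e Ω g₂ = ∏ j, e (id0 j * (id1 j) ^ h j) (y (t j)) := by
        rw [hΩ, hprod]
        refine Finset.prod_congr rfl fun j _ => ?_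
        rw [hσ, hy, hpr, hl, hl, hpl, hpl, hpl, mul_zpow, ← zpow_mul,
          mul_comm (κ (t j)) (h j)]
    _ = ∏ i, ∏ j ∈ univ.filter (fun j => t j = i), e (id0 j * (id1 j) ^ h j) (y (t j)) :=
        (Finset.prod_fiberwise_of_maps_to (fun j _ => Finset.mem_univ (t j)) _).symm
    _ = _ := by
        refine Finset.prod_congr rfl fun i _ => ?_
        rw [hprod]
        exact Finset.prod_congr rfl fun j hj => by
          rw [(Finset.mem_filter.mp hj).2]
end

section
/- Simulated signatures verify: let id₀ = g₁^{α₀}(g₁^a)^{α₀'}, id₁ = g₁^{α₁}(g₁^a)^{α₁'} with α₁' ≠ 0, set h = −α₀'/α₁' mod q, and let y = g₂^{bκ}. Then σ = ψ(g₂^{bκ(α₀ − α₁ α₀'/α₁')}) satisfies ê(σ, g₂) = ê(id₀ · id₁^h, y), i.e., σ is a valid signature with hash value h, and σ does not depend on a. -/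
/-- Raising a group element to an exponent in `ZMod q` (via its canonical representative). -/
def zp {G : Type*} [Group G] {q : ℕ} (g : G) (x : ZMod q) : G := g ^ x.val

/-- simulated signatures verify: with id₀ = g₁^{α₀}(g₁^a)^{α₀'},
id₁ = g₁^{α₁}(g₁^a)^{α₁'}, h = −α₀'/α₁', y = g₂^{bκ}, the (a-free) element
σ = ψ(g₂^{bκ(α₀ − α₁α₀'/α₁')}) satisfies ê(σ, g₂) = ê(id₀·id₁^h, y). -/
theorem stmt11 {G₁ G₂ GT : Type*} [CommGroup G₁] [CommGroup G₂] [CommGroup GT]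
    (q : ℕ) [Fact q.Prime] (g₁ : G₁) (g₂ : G₂)
    (hord₁ : orderOf g₁ = q) (hord₂ : orderOf g₂ = q)
    (e : G₁ → G₂ → GT)
    (hl : ∀ (x x' : G₁) (y : G₂), e (x * x') y = e x y * e x' y)
    (hbil : ∀ α β : ℕ, e (g₁ ^ α) (g₂ ^ β) = e g₁ g₂ ^ (α * β))
    (ψ : G₂ →* G₁) (hψ : ψ g₂ = g₁)
    (a b κ α₀ α₀' α₁ α₁' : ZMod q) (hα₁' : α₁' ≠ 0)
    (h : ZMod q) (hh : h = -α₀' / α₁')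
    (id₀ id₁ : G₁)
    (hid₀ : id₀ = zp g₁ α₀ * zp (zp g₁ a) α₀')
    (hid₁ : id₁ = zp g₁ α₁ * zp (zp g₁ a) α₁')
    (y : G₂) (hy : y = zp g₂ (b * κ))
    (σ : G₁) (hσ : σ = ψ (zp g₂ (b * κ * (α₀ - α₁ * α₀' / α₁')))) :
    e σ g₂ = e (id₀ * zp id₁ h) y := by
  have hq : q ≠ 0 := (Fact.out : q.Prime).ne_zero
  have : NeZero q := ⟨hq⟩
  -- order of e g₁ g₂ divides q
  have hEq : (e g₁ g₂) ^ q = 1 := by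
    have h1 : e (1 : G₁) g₂ = 1 := by
      have := hl 1 1 g₂
      rw [mul_one] at this
      exact (mul_eq_left.mp this.symm)
    have := hbil q 1
    rw [pow_one, mul_one] at this
    rw [← this, ← hord₁, pow_orderOf_eq_one]
    exact h1
  have hdvd : orderOf (e g₁ g₂) ∣ q := orderOf_dvd_of_pow_eq_one hEq
  -- a congruence principle
  have key : ∀ m n : ℕ, (m : ZMod q) = (n : ZMod q) → (e g₁ g₂) ^ m = (e g₁ g₂) ^ n := by
    intro m n hmn
    have : m ≡ n [MOD q] := (ZMod.natCast_eq_natCast_iff m n q).mp hmn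
    exact (pow_eq_pow_iff_modEq.mpr (this.of_dvd hdvd))
  -- LHS
  have hψpow : ∀ n : ℕ, ψ (g₂ ^ n) = g₁ ^ n := by
    intro n; rw [map_pow, hψ]
  have lhs : e σ g₂ = (e g₁ g₂) ^ (b * κ * (α₀ - α₁ * α₀' / α₁')).val := by
    rw [hσ]
    unfold zp
    rw [hψpow]
    have := hbil (b * κ * (α₀ - α₁ * α₀' / α₁')).val 1
    rw [pow_one, mul_one] at this
    exact this
  -- RHS
  have rhs : e (id₀ * zp id₁ h) y
      = (e g₁ g₂) ^ ((α₀.val + a.val * α₀'.val + (α₁.val + a.val * α₁'.val) * h.val)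
          * (b * κ).val) := by
    rw [hid₀, hid₁, hy]
    unfold zp
    simp only [mul_pow, ← pow_mul, ← pow_add]
    rw [hbil]
    try congr 1
    try ring
  rw [lhs, rhs]
  apply key
  push_cast [ZMod.natCast_val, ZMod.cast_id]
  rw [hh]
  field_simp
  ring
end
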